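/- arXiv:0810.1437 — 4 statements merged into one kernel-verified Lean document; each statement's English description precedes it below -/
import Mathlib

section
/- Let C be a cycle of length 11 in a graph G that has no 5-cycles, no 7-cycles, and no adjacent triangles, and suppose some edge uv of C lies on a triangle uvx with x not on C. Then x has no neighbor on C other than u and v. -/
open SimpleGraph

/-- `G` contains a cycle of length `n`. -/
def SimpleGraph.HasCycleLength {V : Type*} (G : SimpleGraph V) (n : ℕ) : Prop :=
  ∃ (v : V) (c : G.Walk v v), c.IsCycle ∧ c.length = n

/-- No two triangles of `G` share an edge: two triangles on a common edge `uv`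
must have the same apex. -/
def SimpleGraph.NoAdjacentTriangles {V : Type*} (G : SimpleGraph V) : Prop :=
  ∀ u v x y : V, G.Adj u v → G.Adj u x → G.Adj v x → G.Adj u y → G.Adj v y → x = y

/-- The consecutive pairs of a list, read cyclically. -/
def cyclicPairs {V : Type*} (l : List V) : List (V × V) := l.zip (l.rotate 1)

/-- A (combinatorial) plane graph: a finite connected simple graph together with a
finite set of faces, each face being given by its boundary closed walk, such that
every edge lies on exactly two face-incidences and Euler's formula holds. -/
structure PlaneGraph where
  V : Type
  [decV : DecidableEq V]
  [fintV : Fintype V]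
  G : SimpleGraph V
  F : Type
  [fintF : Fintype F]
  /-- the unbounded (outer) face -/
  outer : F
  /-- the closed boundary walk of each face, as a cyclic list of vertices -/
  boundary : F → List V
  boundary_adj : ∀ f, ∀ p ∈ cyclicPairs (boundary f), G.Adj p.1 p.2
  edge_faces : ∀ e ∈ G.edgeSet,
    (∑ f : F, ((cyclicPairs (boundary f)).map (fun p => Sym2.mk p.1 p.2)).count e) = 2
  connected : G.Connected
  euler : (Fintype.card V : ℤ) - (G.edgeSet.ncard : ℤ) + (Fintype.card F : ℤ) = 2

attribute [instance] PlaneGraph.decV PlaneGraph.fintV PlaneGraph.fintF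

/-- `|V(G)| + |E(G)|`. -/
noncomputable def PlaneGraph.size (P : PlaneGraph) : ℕ := Nat.card P.V + P.G.edgeSet.ncard

/-- The degree of a face: the length of its boundary walk. -/
def PlaneGraph.faceDegree (P : PlaneGraph) (f : P.F) : ℕ := (P.boundary f).length

/-- The (multi)set of edges on the boundary of a face. -/
def PlaneGraph.faceEdges (P : PlaneGraph) (f : P.F) : List (Sym2 P.V) :=
  (cyclicPairs (P.boundary f)).map (fun p => Sym2.mk p.1 p.2)

/-- The class 𝓖: no 5-cycles, no 7-cycles, no adjacent triangles. -/
def PlaneGraph.Good (P : PlaneGraph) : Prop :=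
  ¬ P.G.HasCycleLength 5 ∧ ¬ P.G.HasCycleLength 7 ∧ P.G.NoAdjacentTriangles

/-- A map `φ` is a proper 3-coloring of (the boundary of) the face `f`. -/
def PlaneGraph.ProperOn (P : PlaneGraph) (φ : P.V → Fin 3) (f : P.F) : Prop :=
  ∀ p ∈ cyclicPairs (P.boundary f), φ p.1 ≠ φ p.2

/-- The precoloring `φ` of the face `f` extends to a proper 3-coloring of the
whole graph. -/
def PlaneGraph.Extends (P : PlaneGraph) (φ : P.V → Fin 3) (f : P.F) : Prop :=
  ∃ ψ : P.V → Fin 3, (∀ a b, P.G.Adj a b → ψ a ≠ ψ b) ∧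
    ∀ v ∈ P.boundary f, ψ v = φ v

/-- A special 11-face: its boundary is an 11-cycle, it is adjacent to a triangle
sharing one edge with it, no vertex off the boundary has three or more neighbors
on it (no claw-center), and no adjacent pair of vertices off the boundary has
four or more neighbors on it in total (no d-claw-center). -/
def PlaneGraph.SpecialFace (P : PlaneGraph) (f : P.F) : Prop :=
  (P.boundary f).Nodup ∧ (P.boundary f).length = 11 ∧
  (∃ x u v, x ∉ P.boundary f ∧ Sym2.mk u v ∈ P.faceEdges f ∧
    P.G.Adj x u ∧ P.G.Adj x v) ∧
  (∀ x, x ∉ P.boundary f → {v | v ∈ P.boundary f ∧ P.G.Adj x v}.ncard ≤ 2) ∧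
  (∀ x y, x ∉ P.boundary f → y ∉ P.boundary f → P.G.Adj x y →
    {v | v ∈ P.boundary f ∧ P.G.Adj x v}.ncard +
      {v | v ∈ P.boundary f ∧ P.G.Adj y v}.ncard ≤ 3)

/-- A face of the kind considered in the main theorem: a 3-face or a 9-face
bounded by a cycle, or a special 11-face. -/
def PlaneGraph.AllowedFace (P : PlaneGraph) (f : P.F) : Prop :=
  ((P.boundary f).Nodup ∧ ((P.boundary f).length = 3 ∨ (P.boundary f).length = 9))
    ∨ P.SpecialFace f

/-- `(P, f, φ)` is a counterexample to the extension theorem. -/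
def PlaneGraph.Counterexample (P : PlaneGraph) (f : P.F) (φ : P.V → Fin 3) : Prop :=
  P.Good ∧ (P.G.HasCycleLength 4 ∨ P.G.HasCycleLength 6) ∧ P.AllowedFace f ∧
    P.ProperOn φ f ∧ ¬ P.Extends φ f

/-- A counterexample minimizing `|V| + |E|`. -/
def PlaneGraph.MinimalCounterexample (P : PlaneGraph) (f : P.F) (φ : P.V → Fin 3) :
    Prop :=
  P.Counterexample f φ ∧
    ∀ (Q : PlaneGraph) (g : Q.F) (ψ : Q.V → Fin 3),
      Q.Counterexample g ψ → P.size ≤ Q.size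

/-- The boundary cycle of `f` has no chord: any edge between boundary vertices
is a boundary edge. -/
def PlaneGraph.Chordless (P : PlaneGraph) (f : P.F) : Prop :=
  ∀ u v, u ∈ P.boundary f → v ∈ P.boundary f → P.G.Adj u v →
    Sym2.mk u v ∈ P.faceEdges f

/-- 2-connectedness. -/
def SimpleGraph.TwoConnected {V : Type*} (G : SimpleGraph V) : Prop :=
  3 ≤ Nat.card V ∧ ∀ v : V, ((⊤ : G.Subgraph).deleteVerts {v}).coe.Connected

/-!
Cut the 11-cycle at the edge `uv` into a path `P` from `v` to `u` of length 10. A third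
neighbour `w` of `x` on `P` splits it into arcs of lengths `k` and `10 - k`. Closing the arc
from `v` to `w` through `x`, directly or via `u`, gives cycles of lengths `k + 2` and `k + 3`,
so `k ∉ {2, 3, 4, 5}`; and `k = 1` would put the triangles `xvw` and `xvu` on the edge `xv`.
Hence `k ≥ 6`, symmetrically `10 - k ≥ 6`, and `P` would have length at least 12.
-/

namespace SimpleGraph.Walk

variable {V : Type*} {G : SimpleGraph V}

theorem IsPath.hasCycleLength_length_add_two {a b x : V} {p : G.Walk a b} (hp : p.IsPath)
    (hab : a ≠ b) (hx : x ∉ p.support) (hxa : G.Adj x a) (hxb : G.Adj x b) :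
    G.HasCycleLength (p.length + 2) := by
  refine ⟨x, cons hxa (p.concat hxb.symm),
    (cons_isCycle_iff _ _).2 ⟨hp.concat hx _, ?_⟩, by simp⟩
  rw [edges_concat, List.concat_eq_append, List.mem_append, List.mem_singleton, not_or]
  refine ⟨fun h => hx (p.fst_mem_support_of_mem_edges h), fun h => ?_⟩
  rcases Sym2.eq_iff.1 h with ⟨rfl, -⟩ | ⟨-, rfl⟩
  · exact hx p.end_mem_support
  · exact hab rfl

theorem IsCycle.eq_snd_or_eq_penultimate_of_mem_edges {u v : V} {c : G.Walk u u}
    (hc : c.IsCycle) (he : s(u, v) ∈ c.edges) : v = c.snd ∨ v = c.penultimate := by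
  have huv := (c.adj_of_mem_edges he).ne
  rw [← c.cons_tail_eq hc.not_nil, edges_cons, List.mem_cons] at he
  rcases he with he | he
  · exact .inl (by simpa [huv.symm] using he)
  · right
    have h3 := hc.three_le_length
    simpa [penultimate, show c.length - 1 - 1 + 1 = c.length - 1 by omega] using
      hc.isPath_tail.eq_penultimate_of_mem_edges he

theorem IsCycle.exists_isPath_of_mem_edges {a u v : V} {c : G.Walk a a} (hc : c.IsCycle)
    (he : s(u, v) ∈ c.edges) :
    ∃ p : G.Walk v u, p.IsPath ∧ p.length + 1 = c.length ∧
      ∀ w, w ∈ p.support ↔ w ∈ c.support := by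
  classical
  have hu := c.fst_mem_support_of_mem_edges he
  obtain ⟨d, hd, hdl, hds, rfl⟩ : ∃ d : G.Walk u u, d.IsCycle ∧ d.length = c.length ∧
      (∀ w, w ∈ d.support ↔ w ∈ c.support) ∧ v = d.snd := by
    have hr : (c.rotate u hu).IsCycle := hc.rotate hu
    have hrs : ∀ w, w ∈ (c.rotate u hu).support ↔ w ∈ c.support :=
      fun _ => mem_support_rotate_iff ..
    rcases hr.eq_snd_or_eq_penultimate_of_mem_edges ((c.rotate_edges u hu).mem_iff.2 he) with h | h
    · exact ⟨_, hr, length_rotate .., hrs, h⟩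
    · exact ⟨_, hr.reverse, by simp, by simp [hrs], by rw [snd_reverse, h]⟩
  refine ⟨d.tail, hd.isPath_tail, by rw [length_tail_add_one hd.not_nil, hdl], fun w => ?_⟩
  rw [support_tail_of_not_nil _ hd.not_nil, ← hds, mem_support_iff]
  refine ⟨Or.inr, ?_⟩
  rintro (rfl | h)
  · exact d.end_mem_tail_support hd.not_nil
  · exact h

theorem six_le_length_of_common_neighbor (h5 : ¬ G.HasCycleLength 5)
    (h7 : ¬ G.HasCycleLength 7) (hT : G.NoAdjacentTriangles) {u v w x : V}
    {q : G.Walk v w} {r : G.Walk w u}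
    (hp : (q.append r).IsPath) (huv : G.Adj u v) (hx : x ∉ (q.append r).support)
    (hxu : G.Adj x u) (hxv : G.Adj x v) (hxw : G.Adj x w) (hwu : w ≠ u) (hwv : w ≠ v) :
    6 ≤ q.length := by
  have hq : q.IsPath := hp.of_append_left
  have hxq : x ∉ q.support := fun h => hx ((mem_support_append_iff q r).2 (Or.inl h))
  have huq : u ∉ q.support := fun h => List.disjoint_of_nodup_append
    (support_append q r ▸ hp.support_nodup) h (r.end_mem_tail_support (not_nil_of_ne hwu))
  have hcycle : ∀ n, G.HasCycleLength n → n ≠ 5 ∧ n ≠ 7 :=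
    fun n hn => ⟨by rintro rfl; exact h5 hn, by rintro rfl; exact h7 hn⟩
  have hvw := hcycle _ (hq.hasCycleLength_length_add_two hwv.symm hxq hxv hxw)
  have huvw := hcycle _ ((hq.cons huq (h := huv)).hasCycleLength_length_add_two hwu.symm
    (by simp [hxu.ne, hxq]) hxu hxw)
  have h0 : q.length ≠ 0 := fun h => hwv (eq_of_length_eq_zero h).symm
  have h1 : q.length ≠ 1 := fun h =>
    hwu (hT v x u w hxv.symm huv.symm hxu (q.adj_of_length_eq_one h) hxw).symm
  rw [length_cons] at huvw
  omega

theorem IsPath.twelve_le_length_of_common_neighbor (h5 : ¬ G.HasCycleLength 5)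
    (h7 : ¬ G.HasCycleLength 7) (hT : G.NoAdjacentTriangles) {u v w x : V}
    {p : G.Walk v u} (hp : p.IsPath)
    (huv : G.Adj u v) (hx : x ∉ p.support) (hxu : G.Adj x u) (hxv : G.Adj x v)
    (hxw : G.Adj x w) (hw : w ∈ p.support) (hwu : w ≠ u) (hwv : w ≠ v) : 12 ≤ p.length := by
  obtain ⟨q, r, -, -, rfl⟩ := hp.mem_support_iff_exists_append.1 hw
  have hleft := six_le_length_of_common_neighbor h5 h7 hT hp huv hx hxu hxv hxw hwu hwv
  have hright := six_le_length_of_common_neighbor h5 h7 hT (q := r.reverse) (r := q.reverse)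
    (by rw [← reverse_append]; exact hp.reverse) huv.symm (by simpa [and_comm] using hx)
    hxv hxu hxw hwv hwu
  rw [length_reverse] at hright
  rw [length_append]
  omega

end SimpleGraph.Walk

/-- If C is an 11-cycle in a graph with no 5-cycles, no
7-cycles and no adjacent triangles, and the edge uv of C lies on a triangle uvx
with x off C, then x has no neighbor on C other than u and v. -/
theorem apex_of_triangle_on_11cycle_has_no_other_neighbor
    {V : Type} (G : SimpleGraph V)
    (h5 : ¬ G.HasCycleLength 5) (h7 : ¬ G.HasCycleLength 7)
    (hT : G.NoAdjacentTriangles)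
    {a : V} (c : G.Walk a a) (hc : c.IsCycle) (h11 : c.length = 11)
    {u v x : V} (huv : Sym2.mk u v ∈ c.edges) (hx : x ∉ c.support)
    (hxu : G.Adj x u) (hxv : G.Adj x v) :
    ∀ w ∈ c.support, G.Adj x w → w = u ∨ w = v := by
  intro w hw hxw
  by_contra! hwuv
  obtain ⟨p, hp, hlen, hsupp⟩ := hc.exists_isPath_of_mem_edges huv
  have := Walk.IsPath.twelve_le_length_of_common_neighbor h5 h7 hT hp (c.adj_of_mem_edges huv)
    (fun h => hx ((hsupp x).1 h)) hxu hxv hxw ((hsupp w).2 hw) hwuv.1 hwuv.2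
  omega
end

section
/- Let G be a plane graph with no 5-cycles, no 7-cycles, and no adjacent triangles. If H is obtained from G by identifying the two diagonal vertices u and w of a 4-cycle uvwx none of whose edges lies in a triangle, then H has no adjacent triangles, and every 5-cycle of H corresponds to a 7-cycle of G and every 7-cycle of H corresponds to a 9-cycle of G passing through both u and w. -/
open SimpleGraph

open Classical in
/-- The graph obtained from `G` by identifying the vertex `w` with the vertex
`u` (the identified vertex is `u`; the old vertex `w` becomes isolated). -/
noncomputable def SimpleGraph.identify {V : Type} (G : SimpleGraph V) (u w : V) :
    SimpleGraph V where
  Adj a b := a ≠ b ∧ ∃ a' b', G.Adj a' b' ∧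
    (if a' = w then u else a') = a ∧ (if b' = w then u else b') = b
  symm := ⟨by
    rintro a b ⟨hab, a', b', h, ha, hb⟩
    exact ⟨hab.symm, b', a', h.symm, hb, ha⟩⟩
  loopless := ⟨fun a h => h.1 rfl⟩

/-!
A cycle of `G.identify u w` through the merged vertex `u` comes from a cycle of `G` of the same
length, or from a `u`–`w` path of that length in `G`. A `u`–`w` path of odd length at most 7
avoids the common neighbour `x` of `u` and `w`: otherwise `x` cuts it into two pieces, each a
single edge or closing through `x` into a cycle, and since there are no triangles on `ux`, `wx`
and no 5- or 7-cycles both pieces would have odd length. Closing the path through `x` then gives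
a cycle two edges longer through `u` and `w`: a 5-cycle for length 3 (which is what makes the
two triangles of an adjacent pair in the identified graph lift to the same side), a 7-cycle for
length 5 and a 9-cycle for length 7.
-/

namespace SimpleGraph

section Paths

variable {V : Type*} {G : SimpleGraph V}

namespace Walk

theorem IsPath.isCycle_cons {a b : V} {q : G.Walk a b} (hq : q.IsPath) (h : G.Adj b a)
    (hl : 2 ≤ q.length) : (cons h q).IsCycle :=
  (cons_isCycle_iff q h).2 ⟨hq, fun he => by
    have := hq.length_eq_one_of_mem_edges (Sym2.eq_swap ▸ he)
    omega⟩

theorem IsPath.length_eq_one_or_hasCycleLength_succ {a b : V} {q : G.Walk a b}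
    (hq : q.IsPath) (h : G.Adj b a) (hab : ∀ t, ¬ (G.Adj a t ∧ G.Adj b t)) :
    q.length = 1 ∨ 3 ≤ q.length ∧ G.HasCycleLength (q.length + 1) := by
  have h0 : q.length ≠ 0 := fun h0 => h.ne (q.eq_of_length_eq_zero h0).symm
  have h2 : q.length ≠ 2 := fun h2 => hab (q.getVert 1)
    ⟨by simpa using q.adj_getVert_succ (i := 0) (by omega),
      by simpa [← h2, getVert_length] using (q.adj_getVert_succ (i := 1) (by omega)).symm⟩
  by_cases h1 : q.length = 1
  · exact Or.inl h1
  · exact Or.inr ⟨by omega, ⟨b, cons h q, hq.isCycle_cons h (by omega), rfl⟩⟩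

end Walk

open Walk

variable {u w x : V}

theorem Walk.IsPath.notMem_support_of_adj (h5 : ¬ G.HasCycleLength 5)
    (h7 : ¬ G.HasCycleLength 7) (hxu : G.Adj x u) (hwx : G.Adj w x)
    (hu : ∀ t, ¬ (G.Adj x t ∧ G.Adj u t)) (hw : ∀ t, ¬ (G.Adj w t ∧ G.Adj x t))
    {p : G.Walk u w} (hp : p.IsPath) (hodd : Odd p.length) (hle : p.length ≤ 7) :
    x ∉ p.support := by
  classical
  intro hx
  have hsplit : (p.takeUntil x hx).length + (p.dropUntil x hx).length = p.length := by
    rw [← length_append, take_spec]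
  have arm : ∀ n, n = 1 ∨ 3 ≤ n ∧ G.HasCycleLength (n + 1) → n ≠ 0 ∧ n ≠ 2 ∧ n ≠ 4 ∧ n ≠ 6 := by
    rintro n (rfl | ⟨hn, hc⟩)
    · omega
    · refine ⟨by omega, by omega, ?_, ?_⟩ <;> rintro rfl
      exacts [h5 hc, h7 hc]
  have hq := arm _ <| (hp.takeUntil hx).length_eq_one_or_hasCycleLength_succ hxu
    fun t ht => hu t ht.symm
  have hr := arm _ <| (hp.dropUntil hx).length_eq_one_or_hasCycleLength_succ hwx
    fun t ht => hw t ht.symm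
  obtain ⟨k, hk⟩ := hodd
  omega

theorem Walk.IsPath.exists_isCycle_of_adj (h5 : ¬ G.HasCycleLength 5)
    (h7 : ¬ G.HasCycleLength 7) (huw : u ≠ w) (hxu : G.Adj x u) (hwx : G.Adj w x)
    (hu : ∀ t, ¬ (G.Adj x t ∧ G.Adj u t)) (hw : ∀ t, ¬ (G.Adj w t ∧ G.Adj x t))
    {p : G.Walk u w} (hp : p.IsPath) (hodd : Odd p.length) (hle : p.length ≤ 7) :
    ∃ c : G.Walk w w, c.IsCycle ∧ c.length = p.length + 2 ∧ u ∈ c.support ∧ w ∈ c.support := by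
  have hx := hp.notMem_support_of_adj h5 h7 hxu hwx hu hw hodd hle
  have hpos : p.length ≠ 0 := fun h0 => huw (p.eq_of_length_eq_zero h0)
  exact ⟨cons hwx (cons hxu p), (hp.cons hx).isCycle_cons hwx (by simp; omega), by simp,
    by simp, by simp⟩

theorem not_adj_of_adj_of_adj (h5 : ¬ G.HasCycleLength 5) (h7 : ¬ G.HasCycleLength 7)
    (huw : u ≠ w) (hxu : G.Adj x u) (hwx : G.Adj w x)
    (hu : ∀ t, ¬ (G.Adj x t ∧ G.Adj u t)) (hw : ∀ t, ¬ (G.Adj w t ∧ G.Adj x t))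
    (b c : V) : G.Adj u b → G.Adj b c → ¬ G.Adj c w := by
  intro hub hbc hcw
  have huw' : ¬ G.Adj u w := fun h => hu w ⟨hwx.symm, h⟩
  have hp : (cons hub (cons hbc (cons hcw nil))).IsPath := by
    simp only [isPath_def, support_cons, support_nil, List.nodup_cons, List.mem_cons,
      List.not_mem_nil, List.nodup_nil]
    refine ⟨?_, ?_, ?_, by simp⟩ <;> rintro (rfl | rfl | rfl | h) <;> simp_all
  obtain ⟨c, hc, hl, -⟩ := hp.exists_isCycle_of_adj h5 h7 huw hxu hwx hu hw ⟨1, rfl⟩ (by simp)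
  exact h5 ⟨w, c, hc, hl⟩

end Paths

section Identify

variable {V : Type} {G : SimpleGraph V} {u w : V}

theorem identify_adj_iff (huw : u ≠ w) {a b : V} :
    (G.identify u w).Adj a b ↔ a ≠ b ∧ a ≠ w ∧ b ≠ w ∧
      (G.Adj a b ∨ a = u ∧ G.Adj w b ∨ b = u ∧ G.Adj a w) := by
  change (_ ∧ _) ↔ _
  constructor
  · rintro ⟨hab, a', b', h, ha, hb⟩
    split_ifs at ha hb with ha' hb' hb'
    · exact absurd (ha'.trans hb'.symm) h.ne
    · subst ha hb ha'
      exact ⟨hab, huw, h.ne', Or.inr (Or.inl ⟨rfl, h⟩)⟩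
    · subst ha hb hb'
      exact ⟨hab, ha', huw, Or.inr (Or.inr ⟨rfl, h⟩)⟩
    · subst ha hb
      exact ⟨hab, ha', hb', Or.inl h⟩
  · rintro ⟨hab, haw, hbw, h | ⟨rfl, h⟩ | ⟨rfl, h⟩⟩
    · exact ⟨hab, a, b, h, if_neg haw, if_neg hbw⟩
    · exact ⟨hab, w, b, h, if_pos rfl, if_neg hbw⟩
    · exact ⟨hab, a, w, h, if_neg haw, if_pos rfl⟩

theorem identify_adj_ne_right (huw : u ≠ w) {a b : V} (h : (G.identify u w).Adj a b) :
    b ≠ w :=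
  ((identify_adj_iff huw).1 h).2.2.1

theorem Adj.of_identify (huw : u ≠ w) {a b : V} (h : (G.identify u w).Adj a b) (ha : a ≠ u)
    (hb : b ≠ u) : G.Adj a b := by
  obtain ⟨-, -, -, h | ⟨rfl, -⟩ | ⟨rfl, -⟩⟩ := (identify_adj_iff huw).1 h
  exacts [h, absurd rfl ha, absurd rfl hb]

theorem identify_adj_left (huw : u ≠ w) {b : V} (h : (G.identify u w).Adj u b) :
    G.Adj u b ∨ G.Adj w b := by
  obtain ⟨hub, -, -, h | ⟨-, h⟩ | ⟨rfl, -⟩⟩ := (identify_adj_iff huw).1 h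
  exacts [Or.inl h, Or.inr h, absurd rfl hub]

theorem exists_adj_of_identify_adj_left (huw : u ≠ w) {b : V} (h : (G.identify u w).Adj u b) :
    ∃ s, (s = u ∨ s = w) ∧ G.Adj s b :=
  (identify_adj_left huw h).elim (fun h => ⟨u, .inl rfl, h⟩) (fun h => ⟨w, .inr rfl, h⟩)

namespace Walk

theorem edges_subset_edgeSet_of_identify (huw : u ≠ w) {a b : V}
    (p : (G.identify u w).Walk a b) (hu : u ∉ p.support) : ∀ e ∈ p.edges, e ∈ G.edgeSet := by
  intro e he
  induction e using Sym2.ind with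
  | h c d =>
    exact (p.adj_of_mem_edges he).of_identify huw
      (fun hc => hu (hc ▸ p.fst_mem_support_of_mem_edges he))
      (fun hd => hu (hd ▸ p.snd_mem_support_of_mem_edges he))

theorem notMem_support_of_identify (huw : u ≠ w) {a b : V} (p : (G.identify u w).Walk a b)
    (ha : a ≠ w) : w ∉ p.support := by
  induction p with
  | nil => simpa using ha.symm
  | cons h _ ih => simpa [Ne.symm ha] using ih (identify_adj_ne_right huw h)

end Walk

open Walk

theorem Walk.IsCycle.lift_identify_of_start (huw : u ≠ w) {c : (G.identify u w).Walk u u}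
    (hc : c.IsCycle) :
    G.HasCycleLength c.length ∨ ∃ p : G.Walk u w, p.IsPath ∧ p.length = c.length := by
  cases c with
  | nil => exact (not_isCycle_nil hc).elim
  | @cons _ a _ hua p =>
    have hlen := hc.three_le_length
    obtain ⟨hp, -⟩ := (cons_isCycle_iff p hua).1 hc
    obtain ⟨b, hub, q, hq⟩ := p.reverse.exists_eq_cons_of_ne hua.ne
    have hqp := hp.reverse
    rw [hq, cons_isPath_iff] at hqp
    obtain ⟨hqp, huq⟩ := hqp
    have hlq : p.length = q.length + 1 := by simpa using congrArg length hq
    have hE := edges_subset_edgeSet_of_identify huw q huq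
    have hwq := notMem_support_of_identify huw q (identify_adj_ne_right huw hub)
    have hq' : (q.transfer G hE).IsPath := hqp.transfer hE
    simp only [length_cons, hlq] at hlen ⊢
    rcases identify_adj_left huw hub with hub' | hwb <;>
      rcases identify_adj_left huw hua with hua' | hwa
    · exact Or.inl ⟨a, cons hua'.symm (cons hub' _),
        (hq'.cons (by simpa)).isCycle_cons _ (by simp; omega), by simp⟩
    · exact Or.inr ⟨(cons hub' _).concat hwa.symm,
        (hq'.cons (by simpa)).concat (by simp [hwq, huw.symm]) _, by simp⟩
    · exact Or.inr ⟨(cons hua' (q.transfer G hE).reverse).concat hwb.symm,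
        (hq'.reverse.cons (by simpa)).concat (by simp [hwq, huw.symm]) _, by simp⟩
    · exact Or.inl ⟨a, cons hwa.symm (cons hwb _),
        (hq'.cons (by simpa)).isCycle_cons _ (by simp; omega), by simp⟩

theorem Walk.IsCycle.lift_identify (huw : u ≠ w) {r : V} {c : (G.identify u w).Walk r r}
    (hc : c.IsCycle) :
    G.HasCycleLength c.length ∨ ∃ p : G.Walk u w, p.IsPath ∧ p.length = c.length := by
  classical
  by_cases hu : u ∈ c.support
  · simpa using (hc.rotate hu).lift_identify_of_start huw
  · have hE := edges_subset_edgeSet_of_identify huw c hu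
    exact Or.inl ⟨r, c.transfer G hE, hc.transfer hE, length_transfer _ _⟩

theorem adj_of_identify_adj (huw : u ≠ w) (h3 : ∀ b c, G.Adj u b → G.Adj b c → ¬ G.Adj c w)
    {s b c : V} (hs : s = u ∨ s = w) (hsb : G.Adj s b) (hbc : G.Adj b c)
    (hc : (G.identify u w).Adj u c) : G.Adj s c := by
  rcases hs with rfl | rfl <;> rcases identify_adj_left huw hc with huc | hwc
  · exact huc
  · exact (h3 b c hsb hbc hwc.symm).elim
  · exact (h3 c b huc hbc.symm hsb.symm).elim
  · exact hwc

theorem eq_of_identify_triangles_of_edge_start (huw : u ≠ w) (hT : G.NoAdjacentTriangles)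
    (h3 : ∀ b c, G.Adj u b → G.Adj b c → ¬ G.Adj c w) {b c d : V}
    (hb : (G.identify u w).Adj u b) (hc : (G.identify u w).Adj u c)
    (hbc : (G.identify u w).Adj b c) (hd : (G.identify u w).Adj u d)
    (hbd : (G.identify u w).Adj b d) : c = d := by
  have hbc' := hbc.of_identify huw hb.ne' hc.ne'
  have hbd' := hbd.of_identify huw hb.ne' hd.ne'
  obtain ⟨s, hs, hsb⟩ := exists_adj_of_identify_adj_left huw hb
  exact hT s b c d hsb (adj_of_identify_adj huw h3 hs hsb hbc' hc) hbc'
    (adj_of_identify_adj huw h3 hs hsb hbd' hd) hbd'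

theorem eq_of_identify_triangles_of_apex (huw : u ≠ w) (hT : G.NoAdjacentTriangles)
    (h3 : ∀ b c, G.Adj u b → G.Adj b c → ¬ G.Adj c w) {a b d : V}
    (hab : (G.identify u w).Adj a b) (ha : (G.identify u w).Adj a u)
    (hb : (G.identify u w).Adj b u) (had : (G.identify u w).Adj a d)
    (hbd : (G.identify u w).Adj b d) : d = u := by
  by_contra hdu
  have hab' := hab.of_identify huw ha.ne hb.ne
  obtain ⟨s, hs, hsa⟩ := exists_adj_of_identify_adj_left huw ha.symm
  have hsd : s = d := hT a b s d hab' hsa.symm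
    (adj_of_identify_adj huw h3 hs hsa hab' hb.symm).symm
    (had.of_identify huw ha.ne hdu) (hbd.of_identify huw hb.ne hdu)
  rcases hs with rfl | rfl
  exacts [hdu hsd.symm, identify_adj_ne_right huw had hsd.symm]

theorem identify_noAdjacentTriangles (huw : u ≠ w) (hT : G.NoAdjacentTriangles)
    (h3 : ∀ b c, G.Adj u b → G.Adj b c → ¬ G.Adj c w) :
    (G.identify u w).NoAdjacentTriangles := by
  intro a b c d hab hac hbc had hbd
  by_cases ha : a = u
  · subst ha
    exact eq_of_identify_triangles_of_edge_start huw hT h3 hab hac hbc had hbd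
  by_cases hb : b = u
  · subst hb
    exact eq_of_identify_triangles_of_edge_start huw hT h3 hab.symm hbc hac hbd had
  by_cases hc : c = u
  · subst hc
    exact (eq_of_identify_triangles_of_apex huw hT h3 hab hac hbc had hbd).symm
  by_cases hd : d = u
  · subst hd
    exact eq_of_identify_triangles_of_apex huw hT h3 hab had hbd hac hbc
  exact hT a b c d (hab.of_identify huw ha hb) (hac.of_identify huw ha hc)
    (hbc.of_identify huw hb hc) (had.of_identify huw ha hd) (hbd.of_identify huw hb hd)

end Identify

end SimpleGraph

theorem identification_of_diagonal_vertices_of_4cycle_general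
    (P : PlaneGraph)
    (h5 : ¬ P.G.HasCycleLength 5) (h7 : ¬ P.G.HasCycleLength 7)
    (hT : P.G.NoAdjacentTriangles)
    {u v w x : P.V}
    (hwx : P.G.Adj w x) (hxu : P.G.Adj x u)
    (huw : u ≠ w)
    (htri : ∀ t : P.V,
      ¬ (P.G.Adj u t ∧ P.G.Adj v t) ∧ ¬ (P.G.Adj v t ∧ P.G.Adj w t) ∧
      ¬ (P.G.Adj w t ∧ P.G.Adj x t) ∧ ¬ (P.G.Adj x t ∧ P.G.Adj u t)) :
    (P.G.identify u w).NoAdjacentTriangles ∧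
    ((P.G.identify u w).HasCycleLength 5 → P.G.HasCycleLength 7) ∧
    ((P.G.identify u w).HasCycleLength 7 →
      ∃ (a : P.V) (c : P.G.Walk a a), c.IsCycle ∧ c.length = 9 ∧
        u ∈ c.support ∧ w ∈ c.support) := by
  have hu (t : P.V) := (htri t).2.2.2
  have hw (t : P.V) := (htri t).2.2.1
  refine ⟨identify_noAdjacentTriangles huw hT
    (not_adj_of_adj_of_adj h5 h7 huw hxu hwx hu hw), ?_, ?_⟩
  · rintro ⟨r, c, hc, hl⟩
    rcases hc.lift_identify huw with hG | ⟨p, hp, hpl⟩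
    · exact (h5 (hl ▸ hG)).elim
    · obtain ⟨c', hc', hl', -⟩ := hp.exists_isCycle_of_adj h5 h7 huw hxu hwx hu hw
        (by rw [hpl, hl]; exact ⟨2, rfl⟩) (by omega)
      exact ⟨w, c', hc', by omega⟩
  · rintro ⟨r, c, hc, hl⟩
    rcases hc.lift_identify huw with hG | ⟨p, hp, hpl⟩
    · exact (h7 (hl ▸ hG)).elim
    · obtain ⟨c', hc', hl', hu', hw'⟩ := hp.exists_isCycle_of_adj h5 h7 huw hxu hwx hu hw
        (by rw [hpl, hl]; exact ⟨3, rfl⟩) (by omega)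
      exact ⟨w, c', hc', by omega, hu', hw'⟩

/-- Let G be a plane graph with no 5-cycles, no 7-cycles and
no adjacent triangles, and let uvwx be a 4-cycle none of whose edges lies in a
triangle. The graph H obtained from G by identifying the diagonal vertices u
and w has no adjacent triangles, every 5-cycle of H corresponds to a 7-cycle of
G, and every 7-cycle of H corresponds to a 9-cycle of G through both u and w. -/
theorem identification_of_diagonal_vertices_of_4cycle
    (P : PlaneGraph)
    (h5 : ¬ P.G.HasCycleLength 5) (h7 : ¬ P.G.HasCycleLength 7)
    (hT : P.G.NoAdjacentTriangles)
    {u v w x : P.V}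
    (huv : P.G.Adj u v) (hvw : P.G.Adj v w) (hwx : P.G.Adj w x) (hxu : P.G.Adj x u)
    (huw : u ≠ w) (hvx : v ≠ x)
    (htri : ∀ t : P.V,
      ¬ (P.G.Adj u t ∧ P.G.Adj v t) ∧ ¬ (P.G.Adj v t ∧ P.G.Adj w t) ∧
      ¬ (P.G.Adj w t ∧ P.G.Adj x t) ∧ ¬ (P.G.Adj x t ∧ P.G.Adj u t)) :
    (P.G.identify u w).NoAdjacentTriangles ∧
    ((P.G.identify u w).HasCycleLength 5 → P.G.HasCycleLength 7) ∧
    ((P.G.identify u w).HasCycleLength 7 →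
      ∃ (a : P.V) (c : P.G.Walk a a), c.IsCycle ∧ c.length = 9 ∧
        u ∈ c.support ∧ w ∈ c.support) :=
  identification_of_diagonal_vertices_of_4cycle_general P h5 h7 hT hwx hxu huw htri
end

section
/- Let C be a chordless 11-cycle in a graph G with no adjacent triangles, no 4-cycles, no 5-cycles, and no 7-cycles. Suppose two adjacent vertices a, b not on C together have four neighbors on C: a is adjacent to a_1, a_2 ∈ C and b to b_1, b_2 ∈ C, all four distinct and in clockwise order a_1, a_2, b_1, b_2. If a_1a_2 is an edge of C, then the arcs C(a_2, b_1) and C(b_2, a_1) each contain at least 4 internal vertices, forcing |C| ≥ 12; hence this configuration cannot occur on an 11-cycle. -/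
open SimpleGraph

/-!
Closing the arc of `C` from `a₂` to `b₁` (say with `d` edges) through `b` and `a` gives a
cycle of length `d + 3`, and rerouting it through the edge `a₁a₂` one of length `d + 4`; with
4-, 5- and 7-cycles forbidden this forces `d ≥ 5`. Symmetrically the arc from `b₂` to `a₁` has
at least 5 edges, and together with the edge `a₁a₂` and the arc from `b₁` to `b₂` the cycle `C`
would need at least 12 edges.
-/

open Fin.CommRing

namespace SimpleGraph

variable {V : Type*} {G : SimpleGraph V}

theorem hasCycleLength_of_isPath {u v x y : V} {p : G.Walk u v} (hp : p.IsPath)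
    (hx : x ∉ p.support) (hy : y ∉ p.support) (hxy : G.Adj x y) (hxu : G.Adj x u)
    (hvy : G.Adj v y) : G.HasCycleLength (p.length + 3) := by
  refine ⟨y, .cons hxy.symm (.cons hxu (p.concat hvy)), ?_, by simp⟩
  rw [Walk.cons_isCycle_iff]
  refine ⟨(hp.concat hy hvy).cons ?_, ?_⟩
  · simp [Walk.support_concat, hx, hxy.ne]
  · simp only [Walk.edges_cons, Walk.edges_concat, List.mem_cons, List.concat_eq_append,
      List.mem_append, Sym2.eq_iff, not_or, not_and]
    exact ⟨⟨fun h => absurd h.symm hxy.ne, fun h => absurd (h ▸ p.start_mem_support) hy⟩,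
      fun h => hy (p.fst_mem_support_of_mem_edges h),
      ⟨fun _ => hxy.ne, fun _ h => hx (h ▸ p.end_mem_support)⟩, List.not_mem_nil⟩

variable {n : ℕ} [NeZero n]

def arcWalk (g : Fin n → V) (hadj : ∀ i, G.Adj (g i) (g (i + 1))) (i : Fin n) :
    (k : ℕ) → G.Walk (g i) (g (i + k))
  | 0 => Walk.nil.copy rfl (by simp)
  | k + 1 => ((arcWalk g hadj i k).concat (hadj (i + k))).copy rfl (by push_cast; ring_nf)

variable {g : Fin n → V}

theorem support_arcWalk (hadj : ∀ i, G.Adj (g i) (g (i + 1))) (i : Fin n) (k : ℕ) :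
    (arcWalk g hadj i k).support = (List.range (k + 1)).map (fun j : ℕ => g (i + j)) := by
  induction k with
  | zero => simp [arcWalk]
  | succ k ih => simp [arcWalk, Walk.support_concat, ih, List.range_succ, add_assoc]

@[simp]
theorem length_arcWalk (hadj : ∀ i, G.Adj (g i) (g (i + 1))) (i : Fin n) (k : ℕ) :
    (arcWalk g hadj i k).length = k := by
  induction k with
  | zero => simp [arcWalk]
  | succ k ih => simp [arcWalk, ih]

theorem isPath_arcWalk (hadj : ∀ i, G.Adj (g i) (g (i + 1))) (hinj : Function.Injective g)
    (i : Fin n) {k : ℕ} (hk : k < n) :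
    (arcWalk g hadj i k).IsPath := by
  rw [Walk.isPath_def, support_arcWalk]
  refine List.nodup_range.map_on fun j₁ hj₁ j₂ hj₂ h => ?_
  rw [List.mem_range] at hj₁ hj₂
  have := congrArg Fin.val (add_left_cancel (hinj h))
  rwa [Fin.val_natCast, Fin.val_natCast, Nat.mod_eq_of_lt (by omega),
    Nat.mod_eq_of_lt (by omega)] at this

theorem hasCycleLength_of_adj_arc (hadj : ∀ i, G.Adj (g i) (g (i + 1)))
    (hinj : Function.Injective g) {x y : V} (hx : ∀ j, x ≠ g j) (hy : ∀ j, y ≠ g j)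
    (hxy : G.Adj x y) {i : Fin n} {k : ℕ} (hk : k < n)
    (hxi : G.Adj x (g i)) (hyk : G.Adj y (g (i + k))) : G.HasCycleLength (k + 3) := by
  have hoff : ∀ z, (∀ j, z ≠ g j) → z ∉ (arcWalk g hadj i k).support := fun z hz h => by
    obtain ⟨j, -, hj⟩ := List.mem_map.mp (support_arcWalk hadj i k ▸ h)
    exact hz _ hj.symm
  simpa using hasCycleLength_of_isPath (isPath_arcWalk hadj hinj i hk) (hoff x hx) (hoff y hy)
    hxy hxi hyk.symm

theorem five_le_of_hasCycleLength
    (h4 : ¬ G.HasCycleLength 4) (h5 : ¬ G.HasCycleLength 5) (h7 : ¬ G.HasCycleLength 7)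
    {k : ℕ} (hk₃ : G.HasCycleLength (k + 3)) (hk₄ : G.HasCycleLength (k + 4)) : 5 ≤ k := by
  by_contra! hk
  interval_cases k
  exacts [h4 hk₄, h4 hk₃, h5 hk₃, h7 hk₄, h7 hk₃]

end SimpleGraph

theorem dclaw_with_consecutive_pair_contradiction_general
    {V : Type} (G : SimpleGraph V)
    (h4 : ¬ G.HasCycleLength 4) (h5 : ¬ G.HasCycleLength 5)
    (h7 : ¬ G.HasCycleLength 7)
    (g : Fin 11 → V) (hinj : Function.Injective g)
    (hadj : ∀ i, G.Adj (g i) (g (i + 1)))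
    {a b : V} (ha : ∀ i, a ≠ g i) (hb : ∀ i, b ≠ g i) (hab : G.Adj a b)
    (i₁ i₂ i₃ i₄ : Fin 11)
    (hdist : [i₁, i₂, i₃, i₄].Nodup)
    (horder : (i₂ - i₁).val + (i₃ - i₂).val + (i₄ - i₃).val + (i₁ - i₄).val = 11)
    (ha₁ : G.Adj a (g i₁)) (ha₂ : G.Adj a (g i₂))
    (hb₁ : G.Adj b (g i₃)) (hb₂ : G.Adj b (g i₄))
    (hedge : i₂ = i₁ + 1) :
    False := by
  have hgap : ∀ i j : Fin 11, i + ((j - i).val : Fin 11) = j := fun i j => by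
    rw [Fin.cast_val_eq_self, add_sub_cancel]
  have he : (i₄ - i₃).val ≠ 0 := by
    rw [Ne, Fin.val_eq_zero_iff, sub_eq_zero]
    exact fun h => by simp [h] at hdist
  have hstep : (i₂ - i₁).val = 1 := by simp [hedge]
  set d := (i₃ - i₂).val
  set f := (i₁ - i₄).val
  have hd := five_le_of_hasCycleLength h4 h5 h7
    (hasCycleLength_of_adj_arc hadj hinj ha hb hab (k := d) (by omega) ha₂ (by rwa [hgap]))
    (hasCycleLength_of_adj_arc hadj hinj ha hb hab (k := d + 1) (by omega) ha₁
      (by rwa [Nat.cast_succ, add_comm _ 1, ← add_assoc, ← hedge, hgap]))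
  have hf := five_le_of_hasCycleLength h4 h5 h7
    (hasCycleLength_of_adj_arc hadj hinj hb ha hab.symm (k := f) (by omega) hb₂ (by rwa [hgap]))
    (hasCycleLength_of_adj_arc hadj hinj hb ha hab.symm (k := f + 1) (by omega) hb₂
      (by rwa [Nat.cast_succ, ← add_assoc, hgap, ← hedge]))
  omega

/-- Let C be a chordless 11-cycle (given as `g : Fin 11 → V`)
in a graph with no adjacent triangles and no 4-, 5- and 7-cycles. There is no
pair of adjacent vertices a, b off C with a adjacent to a₁ = g i₁, a₂ = g i₂
and b adjacent to b₁ = g i₃, b₂ = g i₄, all four distinct and in clockwise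
order, with a₁a₂ an edge of C: the arcs C(a₂, b₁) and C(b₂, a₁) would each have
at least 4 internal vertices, forcing |C| ≥ 12. -/
theorem dclaw_with_consecutive_pair_contradiction
    {V : Type} (G : SimpleGraph V)
    (hT : G.NoAdjacentTriangles)
    (h4 : ¬ G.HasCycleLength 4) (h5 : ¬ G.HasCycleLength 5)
    (h7 : ¬ G.HasCycleLength 7)
    (g : Fin 11 → V) (hinj : Function.Injective g)
    (hadj : ∀ i, G.Adj (g i) (g (i + 1)))
    (hchordless : ∀ i j, G.Adj (g i) (g j) → j = i + 1 ∨ i = j + 1)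
    {a b : V} (ha : ∀ i, a ≠ g i) (hb : ∀ i, b ≠ g i) (hab : G.Adj a b)
    (i₁ i₂ i₃ i₄ : Fin 11)
    (hdist : [i₁, i₂, i₃, i₄].Nodup)
    (horder : (i₂ - i₁).val + (i₃ - i₂).val + (i₄ - i₃).val + (i₁ - i₄).val = 11)
    (ha₁ : G.Adj a (g i₁)) (ha₂ : G.Adj a (g i₂))
    (hb₁ : G.Adj b (g i₃)) (hb₂ : G.Adj b (g i₄))
    (hedge : i₂ = i₁ + 1) :
    False :=
  dclaw_with_consecutive_pair_contradiction_general G h4 h5 h7 g hinj hadj ha hb hab i₁ i₂ i₃ i₄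
    hdist horder ha₁ ha₂ hb₁ hb₂ hedge
end

section
/- Let G be a graph with no 4-cycles and no 6-cycle through a fixed vertex configuration, and let C be a chordless 11-cycle. If a vertex z off C has exactly two neighbors y_2, y_3 on C with y_2 y_3 ∈ E(C), and another vertex y adjacent to z has exactly two neighbors y_1, y_4 on C, all four neighbors distinct, then the absence of 4-, 5-, and 7-cycles forces the three arcs of C between consecutive neighbor-vertices (other than the edge y_2y_3) to contain at least 4, 4, and 1 internal vertices respectively in some order, and hence |C| ≥ 12; so no such adjacent pair (a 'd-claw-center') exists for an 11-cycle. -/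
/-!
Closing the arc of `C` from a neighbour `g s` of `y` to a neighbour `g t` of `z` with the
edge `yz` gives a cycle of length `(t - s) + 3`; since there are no 4-, 5- and 7-cycles, no
such arc, in either direction, has length 1, 2 or 4. For the two consecutive neighbours of `z`
on an 11-cycle this leaves a single admissible position for a neighbour of `y`, the one
opposite the edge `g i₂ g i₃`, so `y` cannot have two neighbours on `C`.
-/

open SimpleGraph

open Fin.NatCast

theorem Function.Injective.nodup_map_range_add {α : Type*} {n : ℕ} [NeZero n] {g : Fin n → α}
    (hinj : Function.Injective g) (s : Fin n) {d : ℕ} (hd : d < n) :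
    ((List.range (d + 1)).map fun m : ℕ => g (s + m)).Nodup := by
  refine List.nodup_range.map_on fun a ha b hb hab => ?_
  have := congrArg Fin.val (add_left_cancel (hinj hab))
  simp only [List.mem_range, Fin.val_natCast] at ha hb this
  rwa [Nat.mod_eq_of_lt (by omega), Nat.mod_eq_of_lt (by omega)] at this

namespace SimpleGraph

variable {V : Type*} {G : SimpleGraph V}

theorem hasCycleLength_of_isChain {l : List V} (hne : l ≠ []) (hchain : l.IsChain G.Adj)
    (hnodup : l.Nodup) (hlen : 3 ≤ l.length) (hclose : G.Adj (l.getLast hne) (l.head hne)) :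
    G.HasCycleLength l.length := by
  let p := Walk.ofSupport l hne hchain
  have hp : p.IsPath := by rw [Walk.isPath_def, Walk.support_ofSupport]; exact hnodup
  refine ⟨_, .cons hclose p, ?_, by simp [p]; omega⟩
  rw [Walk.isCycle_iff_isPath_tail_and_le_length]
  simpa [p] using ⟨hp, by omega⟩

variable {n : ℕ} [NeZero n] {g : Fin n → V}

theorem isChain_adj_map_range (hadj : ∀ i, G.Adj (g i) (g (i + 1))) (s : Fin n) (d : ℕ) :
    ((List.range (d + 1)).map fun m : ℕ => g (s + m)).IsChain G.Adj := by
  rw [List.isChain_map, List.isChain_range_succ]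
  intro m _
  simpa [add_assoc] using hadj (s + m)

theorem hasCycleLength_val_sub_add_three (hinj : Function.Injective g)
    (hadj : ∀ i, G.Adj (g i) (g (i + 1))) {u v : V} (hu : ∀ i, u ≠ g i) (hv : ∀ i, v ≠ g i)
    (huv : G.Adj u v) {s t : Fin n} (hvs : G.Adj v (g s)) (hut : G.Adj u (g t)) :
    G.HasCycleLength ((t - s).val + 3) := by
  set arc := (List.range ((t - s).val + 1)).map fun m : ℕ => g (s + m)
  have not_mem_arc : ∀ w, (∀ i, w ≠ g i) → w ∉ arc := by
    intro w hw
    simp only [arc, List.mem_map, not_exists, not_and]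
    exact fun m _ h => hw _ h.symm
  have hchain : (u :: v :: arc).IsChain G.Adj :=
    .cons_cons huv (List.isChain_cons.mpr ⟨by simpa [arc, List.range_succ_eq_map] using hvs,
      isChain_adj_map_range hadj s _⟩)
  have hnodup : (u :: v :: arc).Nodup := by
    simp only [List.nodup_cons, List.mem_cons, not_or]
    exact ⟨⟨huv.ne, not_mem_arc u hu⟩, not_mem_arc v hv,
      hinj.nodup_map_range_add s (t - s).is_lt⟩
  simpa [arc] using hasCycleLength_of_isChain (by simp) hchain hnodup (by simp [arc])
    (by simpa [arc] using hut.symm)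

end SimpleGraph

theorem Fin.eq_add_six_of_arcs {c s : Fin 11} (h₁ : (c - s).val ∉ [1, 2, 4])
    (h₂ : (s - c).val ∉ [1, 2, 4]) (h₃ : (c + 1 - s).val ∉ [1, 2, 4])
    (h₄ : (s - (c + 1)).val ∉ [1, 2, 4]) : s = c + 6 := by
  revert c s
  decide

theorem no_dclaw_center_on_11cycle_general
    {V : Type} (G : SimpleGraph V)
    (h4 : ¬ G.HasCycleLength 4) (h5 : ¬ G.HasCycleLength 5)
    (h7 : ¬ G.HasCycleLength 7)
    (g : Fin 11 → V) (hinj : Function.Injective g)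
    (hadj : ∀ i, G.Adj (g i) (g (i + 1)))
    {z y : V} (hz : ∀ i, z ≠ g i) (hy : ∀ i, y ≠ g i) (hzy : G.Adj z y)
    (i₁ i₂ i₃ i₄ : Fin 11)
    (hdist : [i₁, i₂, i₃, i₄].Nodup)
    (hznbrs : ∀ i, G.Adj z (g i) ↔ i = i₂ ∨ i = i₃)
    (hedge : i₃ = i₂ + 1)
    (hynbrs : ∀ i, G.Adj y (g i) ↔ i = i₁ ∨ i = i₄) :
    False := by
  have arc_admissible : ∀ {a b : V}, G.Adj a b → (∀ i, a ≠ g i) → (∀ i, b ≠ g i) →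
      ∀ {s t}, G.Adj b (g s) → G.Adj a (g t) → (t - s).val ∉ [1, 2, 4] := by
    intro a b hab ha hb s t hs ht hd
    have hcyc := hasCycleLength_val_sub_add_three hinj hadj ha hb hab hs ht
    simp only [List.mem_cons, List.not_mem_nil, or_false] at hd
    rcases hd with hd | hd | hd <;> rw [hd] at hcyc
    exacts [h4 hcyc, h5 hcyc, h7 hcyc]
  have hz₂ : G.Adj z (g i₂) := (hznbrs i₂).2 (.inl rfl)
  have hz₃ : G.Adj z (g (i₂ + 1)) := (hznbrs _).2 (.inr hedge.symm)
  have opposite : ∀ s, G.Adj y (g s) → s = i₂ + 6 := fun s hs =>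
    Fin.eq_add_six_of_arcs (arc_admissible hzy hz hy hs hz₂)
      (arc_admissible hzy.symm hy hz hz₂ hs) (arc_admissible hzy hz hy hs hz₃)
      (arc_admissible hzy.symm hy hz hz₃ hs)
  have h₁₄ : i₁ = i₄ :=
    (opposite i₁ ((hynbrs i₁).2 (.inl rfl))).trans (opposite i₄ ((hynbrs i₄).2 (.inr rfl))).symm
  simp [h₁₄] at hdist

/-- Let C be a chordless 11-cycle (given as `g : Fin 11 → V`)
in a graph with no 4-, 5- and 7-cycles and no adjacent triangles. There is no
"d-claw-center": no pair of adjacent vertices z, y off C such that z has exactly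
the two neighbors g i₂, g i₃ on C with g i₂ g i₃ ∈ E(C), and y has exactly the
two neighbors g i₁, g i₄ on C, all four distinct — the arcs of C between the
neighbors would force |C| ≥ 12. -/
theorem no_dclaw_center_on_11cycle
    {V : Type} (G : SimpleGraph V)
    (h4 : ¬ G.HasCycleLength 4) (h5 : ¬ G.HasCycleLength 5)
    (h7 : ¬ G.HasCycleLength 7) (hT : G.NoAdjacentTriangles)
    (g : Fin 11 → V) (hinj : Function.Injective g)
    (hadj : ∀ i, G.Adj (g i) (g (i + 1)))
    (hchordless : ∀ i j, G.Adj (g i) (g j) → j = i + 1 ∨ i = j + 1)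
    {z y : V} (hz : ∀ i, z ≠ g i) (hy : ∀ i, y ≠ g i) (hzy : G.Adj z y)
    (i₁ i₂ i₃ i₄ : Fin 11)
    (hdist : [i₁, i₂, i₃, i₄].Nodup)
    (hznbrs : ∀ i, G.Adj z (g i) ↔ i = i₂ ∨ i = i₃)
    (hedge : i₃ = i₂ + 1)
    (hynbrs : ∀ i, G.Adj y (g i) ↔ i = i₁ ∨ i = i₄) :
    False :=
  no_dclaw_center_on_11cycle_general G h4 h5 h7 g hinj hadj hz hy hzy i₁ i₂ i₃ i₄ hdist hznbrs hedge
    hynbrs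
end
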